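/- The system Σ admits a nonnegative storage function if and only if the available storage F_a(x) := sup{−supply : trajectories of Σ on some [0,T], T ≥ 0, with x(0) = x} is finite for every state x. Moreover F_a(x) ≥ 0 for all x, and if F_a is finite everywhere then F_a is itself a nonnegative storage function and is minimal among nonnegative storage functions: F_a(x) ≤ F(x) for every nonnegative storage function F and every x. -/

import Mathlib

/-! A nonnegative storage function `F` bounds the available storage: along a trajectory from `x`,
`-supply ≤ F x - F (end) ≤ F x`. Conversely, following a trajectory from `x₁` to `x₂` by any
trajectory from `x₂` gives a trajectory from `x₁`, so `F_a x₂ - supply ≤ F_a x₁`, i.e. `F_a` is a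
storage function; it is nonnegative because the trivial trajectory has supply `0`. -/

open MeasureTheory

/-- A trajectory of the control system `ẋ = f(x,u)` with supply rate `s`,
on an interval `[t₁, t₂]`. -/
structure Traj {n m : ℕ} (f : (Fin n → ℝ) → (Fin m → ℝ) → (Fin n → ℝ))
    (s : (Fin n → ℝ) → (Fin m → ℝ) → ℝ) where
  t₁ : ℝ
  t₂ : ℝ
  hle : t₁ ≤ t₂
  x : ℝ → Fin n → ℝ
  u : ℝ → Fin m → ℝ
  hu : Measurable u
  hx : Continuous x
  hf : IntervalIntegrable (fun t => f (x t) (u t)) volume t₁ t₂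
  hs : IntervalIntegrable (fun t => s (x t) (u t)) volume t₁ t₂
  hdyn : ∀ t ∈ Set.Icc t₁ t₂, x t = x t₁ + ∫ τ in t₁..t, f (x τ) (u τ)

/-- The supply of a trajectory. -/
noncomputable def Traj.supply {n m : ℕ} {f : (Fin n → ℝ) → (Fin m → ℝ) → (Fin n → ℝ)}
    {s : (Fin n → ℝ) → (Fin m → ℝ) → ℝ} (T : Traj f s) : ℝ :=
  ∫ t in T.t₁..T.t₂, s (T.x t) (T.u t)

/-- `F` is a storage function: the dissipation inequality holds along all trajectories. -/
def IsStorage {n m : ℕ} (f : (Fin n → ℝ) → (Fin m → ℝ) → (Fin n → ℝ))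
    (s : (Fin n → ℝ) → (Fin m → ℝ) → ℝ) (F : (Fin n → ℝ) → ℝ) : Prop :=
  ∀ T : Traj f s, F (T.x T.t₂) - F (T.x T.t₁) ≤ T.supply

/-- Cyclo-dissipativity with respect to the ground state `xs`: nonnegative supply along
every trajectory beginning and ending at `xs`. -/
def CycloDissipativeWrt {n m : ℕ} (f : (Fin n → ℝ) → (Fin m → ℝ) → (Fin n → ℝ))
    (s : (Fin n → ℝ) → (Fin m → ℝ) → ℝ) (xs : Fin n → ℝ) : Prop :=
  ∀ T : Traj f s, T.x T.t₁ = xs → T.x T.t₂ = xs → 0 ≤ T.supply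

/-- The set of values `-supply` over trajectories from `x` to `xs`. -/
def Sac {n m : ℕ} (f : (Fin n → ℝ) → (Fin m → ℝ) → (Fin n → ℝ))
    (s : (Fin n → ℝ) → (Fin m → ℝ) → ℝ) (xs x : Fin n → ℝ) : Set ℝ :=
  {r : ℝ | ∃ T : Traj f s, T.x T.t₁ = x ∧ T.x T.t₂ = xs ∧ r = -T.supply}

/-- The set of values `supply` over trajectories from `xs` to `x`. -/
def Src {n m : ℕ} (f : (Fin n → ℝ) → (Fin m → ℝ) → (Fin n → ℝ))
    (s : (Fin n → ℝ) → (Fin m → ℝ) → ℝ) (xs x : Fin n → ℝ) : Set ℝ :=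
  {r : ℝ | ∃ T : Traj f s, T.x T.t₁ = xs ∧ T.x T.t₂ = x ∧ r = T.supply}

/-- The set of values `-supply` over trajectories on some interval `[0, T]` starting at `x`,
whose supremum is the available storage `F_a(x)`. -/
def Sa {n m : ℕ} (f : (Fin n → ℝ) → (Fin m → ℝ) → (Fin n → ℝ))
    (s : (Fin n → ℝ) → (Fin m → ℝ) → ℝ) (x : Fin n → ℝ) : Set ℝ :=
  {r : ℝ | ∃ T : Traj f s, T.t₁ = 0 ∧ T.x 0 = x ∧ r = -T.supply}


open Set

section Piecewise

variable {α β : Type*} [LinearOrder α] {φ ψ : α → β} {a b c : α}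

lemma eqOn_ite_le_left : EqOn (fun t => if t ≤ c then φ t else ψ t) φ (Iic c) :=
  fun _ ht => if_pos ht

lemma eqOn_ite_le_right : EqOn (fun t => if t ≤ c then φ t else ψ t) ψ (Ioi c) :=
  fun _ ht => if_neg (not_le.2 ht)

lemma uIoo_subset_Iic (ha : a ≤ c) (hb : b ≤ c) : uIoo a b ⊆ Iic c :=
  fun _ ht => (ht.2.trans_le (max_le ha hb)).le

lemma uIoo_subset_Ioi (ha : c ≤ a) (hb : c ≤ b) : uIoo a b ⊆ Ioi c :=
  fun _ ht => (le_min ha hb).trans_lt ht.1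

end Piecewise

section PiecewiseIntegral

variable {E : Type*} [NormedAddCommGroup E] {μ : Measure ℝ} [NullSingletonClass μ]
  {φ ψ : ℝ → E} {a b c : ℝ}

lemma IntervalIntegrable.ite_le (hφ : IntervalIntegrable φ μ a c)
    (hψ : IntervalIntegrable ψ μ c b) (hac : a ≤ c) (hcb : c ≤ b) :
    IntervalIntegrable (fun t => if t ≤ c then φ t else ψ t) μ a b :=
  (hφ.congr_uIoo (eqOn_ite_le_left.mono (uIoo_subset_Iic hac le_rfl)).symm).trans
    (hψ.congr_uIoo (eqOn_ite_le_right.mono (uIoo_subset_Ioi le_rfl hcb)).symm)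

variable [NormedSpace ℝ E]

lemma integral_ite_le_of_le (ha : a ≤ c) (hb : b ≤ c) :
    ∫ t in a..b, (if t ≤ c then φ t else ψ t) ∂μ = ∫ t in a..b, φ t ∂μ :=
  intervalIntegral.integral_congr_uIoo (eqOn_ite_le_left.mono (uIoo_subset_Iic ha hb))

lemma integral_ite_le_of_ge (ha : c ≤ a) (hb : c ≤ b) :
    ∫ t in a..b, (if t ≤ c then φ t else ψ t) ∂μ = ∫ t in a..b, ψ t ∂μ :=
  intervalIntegral.integral_congr_uIoo (eqOn_ite_le_right.mono (uIoo_subset_Ioi ha hb))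

lemma integral_ite_le (hφ : IntervalIntegrable φ μ a c)
    (hψ : IntervalIntegrable ψ μ c b) (hac : a ≤ c) (hcb : c ≤ b) :
    ∫ t in a..b, (if t ≤ c then φ t else ψ t) ∂μ = (∫ t in a..c, φ t ∂μ) + ∫ t in c..b, ψ t ∂μ := by
  have hint := hφ.ite_le hψ hac hcb
  have hab : uIcc a b = Icc a b := uIcc_of_le (hac.trans hcb)
  rw [← intervalIntegral.integral_add_adjacent_intervals (b := c)
      (hint.mono_set (uIcc_subset_uIcc_left (by simp [hab, hac, hcb])))
      (hint.mono_set (uIcc_subset_uIcc_right (by simp [hab, hac, hcb]))),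
    integral_ite_le_of_le hac le_rfl, integral_ite_le_of_ge le_rfl hcb]

end PiecewiseIntegral

namespace Traj

variable {n m : ℕ} {f : (Fin n → ℝ) → (Fin m → ℝ) → (Fin n → ℝ)}
  {s : (Fin n → ℝ) → (Fin m → ℝ) → ℝ}

def const (x₀ : Fin n → ℝ) : Traj f s where
  t₁ := 0
  t₂ := 0
  hle := le_rfl
  x _ := x₀
  u _ := 0
  hu := measurable_const
  hx := continuous_const
  hf := IntervalIntegrable.refl
  hs := IntervalIntegrable.refl
  hdyn t ht := by
    obtain rfl : t = 0 := le_antisymm ht.2 ht.1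
    simp

@[simp]
lemma supply_const (x₀ : Fin n → ℝ) : (const x₀ : Traj f s).supply = 0 := by
  simp [supply, const]

def shift (T : Traj f s) (c : ℝ) : Traj f s where
  t₁ := T.t₁ - c
  t₂ := T.t₂ - c
  hle := sub_le_sub_right T.hle c
  x t := T.x (t + c)
  u t := T.u (t + c)
  hu := T.hu.comp (measurable_add_const c)
  hx := T.hx.comp (continuous_add_const c)
  hf := by simpa using T.hf.comp_add_right c
  hs := by simpa using T.hs.comp_add_right c
  hdyn t ht := by
    rw [intervalIntegral.integral_comp_add_right (fun τ => f (T.x τ) (T.u τ)), sub_add_cancel]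
    exact T.hdyn _ ⟨by linarith [ht.1], by linarith [ht.2]⟩

@[simp]
lemma supply_shift (T : Traj f s) (c : ℝ) : (T.shift c).supply = T.supply := by
  simp only [supply, shift]
  rw [intervalIntegral.integral_comp_add_right (fun τ => s (T.x τ) (T.u τ)), sub_add_cancel,
    sub_add_cancel]

noncomputable def append (T T' : Traj f s) (ht : T'.t₁ = T.t₂) (hx : T'.x T.t₂ = T.x T.t₂) :
    Traj f s where
  t₁ := T.t₁
  t₂ := T'.t₂
  hle := T.hle.trans (ht ▸ T'.hle)
  x t := if t ≤ T.t₂ then T.x t else T'.x t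
  u t := if t ≤ T.t₂ then T.u t else T'.u t
  hu := T.hu.ite measurableSet_Iic T'.hu
  hx := T.hx.if_le T'.hx continuous_id continuous_const fun t h => by rw [h, hx]
  hf := by simpa only [apply_ite₂] using T.hf.ite_le (ht ▸ T'.hf) T.hle (ht ▸ T'.hle)
  hs := by simpa only [apply_ite₂] using T.hs.ite_le (ht ▸ T'.hs) T.hle (ht ▸ T'.hle)
  hdyn t htI := by
    rw [if_pos T.hle]
    simp only [apply_ite₂]
    rcases le_or_gt t T.t₂ with hle | hlt
    · rw [if_pos hle, integral_ite_le_of_le T.hle hle]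
      exact T.hdyn t ⟨htI.1, hle⟩
    · have hf' : IntervalIntegrable (fun τ => f (T'.x τ) (T'.u τ)) volume T.t₂ t :=
        T'.hf.mono_set <| by
          rw [ht]; exact uIcc_subset_uIcc_left (mem_uIcc_of_le hlt.le htI.2)
      rw [if_neg hlt.not_ge, integral_ite_le T.hf hf' T.hle hlt.le, ← add_assoc,
        ← T.hdyn T.t₂ ⟨T.hle, le_rfl⟩, ← hx, ← ht]
      exact T'.hdyn t ⟨ht ▸ hlt.le, htI.2⟩

@[simp]
lemma supply_append (T T' : Traj f s) (ht : T'.t₁ = T.t₂) (hx : T'.x T.t₂ = T.x T.t₂) :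
    (T.append T' ht hx).supply = T.supply + T'.supply := by
  have hs' : IntervalIntegrable (fun τ => s (T'.x τ) (T'.u τ)) volume T.t₂ T'.t₂ := ht ▸ T'.hs
  simp only [supply, append, apply_ite₂]
  rw [integral_ite_le T.hs hs' T.hle (ht ▸ T'.hle), ht]

@[simp]
lemma x_append_t₁ (T T' : Traj f s) (ht : T'.t₁ = T.t₂) (hx : T'.x T.t₂ = T.x T.t₂) :
    (T.append T' ht hx).x (T.append T' ht hx).t₁ = T.x T.t₁ :=
  if_pos T.hle

end Traj

section AvailableStorage

variable {n m : ℕ} {f : (Fin n → ℝ) → (Fin m → ℝ) → (Fin n → ℝ)}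
  {s : (Fin n → ℝ) → (Fin m → ℝ) → ℝ}

lemma neg_supply_mem_Sa (T : Traj f s) : -T.supply ∈ Sa f s (T.x T.t₁) :=
  ⟨T.shift T.t₁, sub_self _, by simp [Traj.shift], by simp⟩

lemma zero_mem_Sa (x : Fin n → ℝ) : 0 ∈ Sa f s x := by
  have := neg_supply_mem_Sa (Traj.const x : Traj f s)
  rwa [Traj.supply_const, neg_zero] at this

lemma sSup_Sa_nonneg (x : Fin n → ℝ) : 0 ≤ sSup (Sa f s x) :=
  Real.sSup_nonneg' ⟨0, zero_mem_Sa x, le_rfl⟩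

lemma neg_supply_add_mem_Sa (T T' : Traj f s) (h₀ : T'.t₁ = 0) (hx : T'.x 0 = T.x T.t₂) :
    -(T.supply + T'.supply) ∈ Sa f s (T.x T.t₁) := by
  have ht : (T'.shift (-T.t₂)).t₁ = T.t₂ := by simp [Traj.shift, h₀]
  have hx' : (T'.shift (-T.t₂)).x T.t₂ = T.x T.t₂ := by simp [Traj.shift, hx]
  simpa using neg_supply_mem_Sa (T.append _ ht hx')

lemma IsStorage.mem_upperBounds_Sa {F : (Fin n → ℝ) → ℝ} (hF : IsStorage f s F)
    (hF₀ : ∀ x, 0 ≤ F x) (x : Fin n → ℝ) : F x ∈ upperBounds (Sa f s x) := by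
  rintro r ⟨T, h₀, rfl, rfl⟩
  have := hF T
  rw [h₀] at this
  linarith [hF₀ (T.x T.t₂)]

lemma isStorage_sSup_Sa (hb : ∀ x, BddAbove (Sa f s x)) :
    IsStorage f s fun x => sSup (Sa f s x) := by
  intro T
  rw [sub_le_iff_le_add]
  refine csSup_le ⟨0, zero_mem_Sa _⟩ ?_
  rintro r ⟨T', h₀, hx, rfl⟩
  linarith [le_csSup (hb _) (neg_supply_add_mem_Sa T T' h₀ hx)]

end AvailableStorage

theorem nonneg_storage_iff_available_storage_finite_general {n m : ℕ}
    (f : (Fin n → ℝ) → (Fin m → ℝ) → (Fin n → ℝ))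
    (s : (Fin n → ℝ) → (Fin m → ℝ) → ℝ) :
    ((∃ F : (Fin n → ℝ) → ℝ, (∀ x, 0 ≤ F x) ∧ IsStorage f s F) ↔
      (∀ x, BddAbove (Sa f s x))) ∧
    (∀ x, 0 ≤ sSup (Sa f s x)) ∧
    ((∀ x, BddAbove (Sa f s x)) →
      IsStorage f s (fun x => sSup (Sa f s x)) ∧
      (∀ F : (Fin n → ℝ) → ℝ, (∀ x, 0 ≤ F x) → IsStorage f s F →
        ∀ x, sSup (Sa f s x) ≤ F x)) := by
  refine ⟨⟨?_, fun hb => ⟨_, sSup_Sa_nonneg, isStorage_sSup_Sa hb⟩⟩, sSup_Sa_nonneg,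
    fun hb => ⟨isStorage_sSup_Sa hb, fun F hF₀ hF x => ?_⟩⟩
  · rintro ⟨F, hF₀, hF⟩ x
    exact ⟨F x, hF.mem_upperBounds_Sa hF₀ x⟩
  · exact csSup_le ⟨0, zero_mem_Sa x⟩ (hF.mem_upperBounds_Sa hF₀ x)

/-- The system admits a nonnegative storage function if and only if the available storage
`F_a(x) = sSup (Sa x)` is finite (the set `Sa x` is bounded above) for every `x`; moreover
`F_a ≥ 0`, and whenever `F_a` is finite everywhere it is the minimal nonnegative storage
function. -/
theorem nonneg_storage_iff_available_storage_finite {n m : ℕ}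
    (f : (Fin n → ℝ) → (Fin m → ℝ) → (Fin n → ℝ))
    (s : (Fin n → ℝ) → (Fin m → ℝ) → ℝ)
    (hfc : Continuous fun q : (Fin n → ℝ) × (Fin m → ℝ) => f q.1 q.2)
    (hsc : Continuous fun q : (Fin n → ℝ) × (Fin m → ℝ) => s q.1 q.2) :
    ((∃ F : (Fin n → ℝ) → ℝ, (∀ x, 0 ≤ F x) ∧ IsStorage f s F) ↔
      (∀ x, BddAbove (Sa f s x))) ∧
    (∀ x, 0 ≤ sSup (Sa f s x)) ∧
    ((∀ x, BddAbove (Sa f s x)) →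
      IsStorage f s (fun x => sSup (Sa f s x)) ∧
      (∀ F : (Fin n → ℝ) → ℝ, (∀ x, 0 ≤ F x) → IsStorage f s F →
        ∀ x, sSup (Sa f s x) ≤ F x)) :=
  nonneg_storage_iff_available_storage_finite_general f s
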